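/- Let x̄ ∈ E and λ̄ ∈ ℝ. The following two conditions are equivalent: (a) x̄ ∈ 𝔹, A x̄^{m-1} = λ̄ x̄, and for every nonzero d ∈ E with ⟪x̄, d⟫ = 0 one has (m−1) · A(x̄, …, x̄, d, d) − λ̄ ‖d‖² > 0 (x̄ is a KKT point of the sphere-constrained minimization of φ with multiplier λ̄ satisfying the second-order sufficient condition); (b) x̄ ∈ 𝔹, F(x̄) = 0, λ̄ = A x̄^m, and for every nonzero d ∈ E with ⟪x̄, d⟫ = 0 one has ⟪d, F′(x̄) d⟫ > 0 (the quadratic form of F′(x̄) restricted to the orthogonal complement of x̄ is positive definite). -/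

import Mathlib

open scoped RealInnerProductSpace

noncomputable section

/-- Euclidean space `ℝ^n`. -/
abbrev Euc (n : ℕ) : Type := EuclideanSpace ℝ (Fin n)

/-- An `m`-th order tensor on `ℝ^n`, viewed as a continuous `m`-multilinear form. -/
abbrev Tensor (m n : ℕ) : Type := ContinuousMultilinearMap ℝ (fun _ : Fin m => Euc n) ℝ

/-- A tensor is symmetric if it is invariant under every permutation of its arguments. -/
def IsSymmTensor {m n : ℕ} (A : Tensor m n) : Prop :=
  ∀ (e : Equiv.Perm (Fin m)) (v : Fin m → Euc n), A (v ∘ e) = A v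

/-- `A x^m`, the homogeneous form `A (x, …, x)`. -/
def tpow {m n : ℕ} (A : Tensor m n) (x : Euc n) : ℝ := A (fun _ => x)

/-- The last index of `Fin m`. -/
def lastIdx {m : ℕ} (_hm : 2 ≤ m) : Fin m := ⟨m - 1, by omega⟩

/-- The second to last index of `Fin m`. -/
def sndIdx {m : ℕ} (_hm : 2 ≤ m) : Fin m := ⟨m - 2, by omega⟩

lemma sndIdx_ne_lastIdx {m : ℕ} (hm : 2 ≤ m) : sndIdx hm ≠ lastIdx hm := by
  simp only [sndIdx, lastIdx, Fin.mk.injEq, ne_eq]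
  omega

/-- `A x^{m-1}`: the unique vector with `⟪A x^{m-1}, v⟫ = A (x, …, x, v)` for all `v`. -/
def tvec {m n : ℕ} (A : Tensor m n) (hm : 2 ≤ m) (x : Euc n) : Euc n :=
  (InnerProductSpace.toDual ℝ (Euc n)).symm
    (A.toContinuousLinearMap (fun _ => x) (lastIdx hm))

/-- `F(x) = A x^{m-1} - (A x^m) • x`. -/
def Fvec {m n : ℕ} (A : Tensor m n) (hm : 2 ≤ m) (x : Euc n) : Euc n :=
  tvec A hm x - tpow A x • x

/-- `φ(x) = (1/m) A x^m`. -/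
def phi {m n : ℕ} (A : Tensor m n) (x : Euc n) : ℝ := (1 / (m : ℝ)) * tpow A x

/-- Orthogonal projection `P_x d = d - ⟪x, d⟫ x` (for `x` a unit vector). -/
def Pproj {n : ℕ} (x d : Euc n) : Euc n := d - ⟪x, d⟫ • x

/-- `x(α) = (x + α d)/‖x + α d‖`, the projection of `x + α d` onto the unit sphere. -/
def xcur {n : ℕ} (x d : Euc n) (α : ℝ) : Euc n := ‖x + α • d‖⁻¹ • (x + α • d)

/-- `w(x, d)`: the unique vector with `⟪w(x, d), v⟫ = A (x, …, x, d, v)` for all `v`. -/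
def wvec {m n : ℕ} (A : Tensor m n) (hm : 2 ≤ m) (x d : Euc n) : Euc n :=
  (InnerProductSpace.toDual ℝ (Euc n)).symm
    (A.toContinuousLinearMap (Function.update (fun _ => x) (sndIdx hm) d) (lastIdx hm))

/-- `A (x, …, x, d, d)`. -/
def A2 {m n : ℕ} (A : Tensor m n) (hm : 2 ≤ m) (x d : Euc n) : ℝ :=
  A (Function.update (Function.update (fun _ => x) (sndIdx hm) d) (lastIdx hm) d)

lemma wvec_add {m n : ℕ} (A : Tensor m n) (hm : 2 ≤ m) (x d₁ d₂ : Euc n) :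
    wvec A hm x (d₁ + d₂) = wvec A hm x d₁ + wvec A hm x d₂ := by
  unfold wvec
  rw [← map_add]
  congr 1
  ext v
  simp only [ContinuousMultilinearMap.toContinuousLinearMap_apply, ContinuousLinearMap.add_apply]
  rw [Function.update_comm (sndIdx_ne_lastIdx hm), Function.update_comm (sndIdx_ne_lastIdx hm),
    Function.update_comm (sndIdx_ne_lastIdx hm)]
  exact A.map_update_add _ _ _ _

lemma wvec_smul {m n : ℕ} (A : Tensor m n) (hm : 2 ≤ m) (x : Euc n) (c : ℝ) (d : Euc n) :
    wvec A hm x (c • d) = c • wvec A hm x d := by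
  unfold wvec
  rw [← map_smul]
  congr 1
  ext v
  simp only [ContinuousMultilinearMap.toContinuousLinearMap_apply,
    ContinuousLinearMap.smul_apply, smul_eq_mul]
  rw [Function.update_comm (sndIdx_ne_lastIdx hm), Function.update_comm (sndIdx_ne_lastIdx hm)]
  exact A.map_update_smul _ _ _ _

/-- The Jacobian `F'(x) d = (m-1) w(x,d) - (A x^m) d - m ⟪A x^{m-1}, d⟫ x`. -/
def FderivL {m n : ℕ} (A : Tensor m n) (hm : 2 ≤ m) (x : Euc n) : Euc n →L[ℝ] Euc n :=
  LinearMap.toContinuousLinearMap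
  { toFun := fun d =>
      ((m : ℝ) - 1) • wvec A hm x d - tpow A x • d - ((m : ℝ) * ⟪tvec A hm x, d⟫) • x
    map_add' := by
      intro d₁ d₂
      try simp only
      rw [wvec_add, inner_add_right]
      module
    map_smul' := by
      intro c d
      simp only [RingHom.id_apply]
      rw [wvec_smul, inner_smul_right]
      module }

/-- A Newton direction at `x`: `⟪x, d⟫ = 0` and `P_x (F'(x) d + F(x)) = 0`. -/
def NewtonDir {m n : ℕ} (A : Tensor m n) (hm : 2 ≤ m) (x d : Euc n) : Prop :=
  ⟪x, d⟫ = 0 ∧ Pproj x (FderivL A hm x d + Fvec A hm x) = 0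

/-- The residual function `θ(x) = (1/2)‖F(x)‖²`. -/
def theta {m n : ℕ} (A : Tensor m n) (hm : 2 ≤ m) (x : Euc n) : ℝ :=
  (1 / 2) * ‖Fvec A hm x‖ ^ 2

/-- Assumption (A): second-order sufficient condition at the KKT point `x̄`. -/
def AssumpA {m n : ℕ} (A : Tensor m n) (hm : 2 ≤ m) (xb : Euc n) (lam : ℝ) : Prop :=
  ‖xb‖ = 1 ∧ tvec A hm xb = lam • xb ∧ lam = tpow A xb ∧
    ∀ d : Euc n, d ≠ 0 → ⟪xb, d⟫ = 0 →
      0 < ((m : ℝ) - 1) * A2 A hm xb d - lam * ‖d‖ ^ 2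

end

theorem inner_tvec {m n : ℕ} (A : Tensor m n) (hm : 2 ≤ m) (x v : Euc n) :
    ⟪tvec A hm x, v⟫ = A (Function.update (fun _ => x) (lastIdx hm) v) := by
  rw [tvec, InnerProductSpace.toDual_symm_apply]
  rfl

theorem inner_tvec_self {m n : ℕ} (A : Tensor m n) (hm : 2 ≤ m) (x : Euc n) :
    ⟪tvec A hm x, x⟫ = tpow A x := by
  rw [inner_tvec, Function.update_eq_self, tpow]

theorem inner_wvec_self {m n : ℕ} (A : Tensor m n) (hm : 2 ≤ m) (x d : Euc n) :
    ⟪wvec A hm x d, d⟫ = A2 A hm x d := by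
  rw [wvec, InnerProductSpace.toDual_symm_apply]
  rfl

theorem FderivL_apply {m n : ℕ} (A : Tensor m n) (hm : 2 ≤ m) (x d : Euc n) :
    FderivL A hm x d =
      ((m : ℝ) - 1) • wvec A hm x d - tpow A x • d - ((m : ℝ) * ⟪tvec A hm x, d⟫) • x :=
  rfl

theorem inner_FderivL_self_of_inner_eq_zero {m n : ℕ} (A : Tensor m n) (hm : 2 ≤ m)
    {x d : Euc n} (hxd : ⟪x, d⟫ = 0) :
    ⟪d, FderivL A hm x d⟫ = ((m : ℝ) - 1) * A2 A hm x d - tpow A x * ‖d‖ ^ 2 := by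
  rw [FderivL_apply, inner_sub_right, inner_sub_right, inner_smul_right, inner_smul_right,
    inner_smul_right, real_inner_comm (wvec A hm x d), inner_wvec_self,
    real_inner_self_eq_norm_sq, real_inner_comm x d, hxd]
  ring

theorem tvec_eq_smul_iff {m n : ℕ} (A : Tensor m n) (hm : 2 ≤ m) {x : Euc n} (hx : ‖x‖ = 1)
    (lam : ℝ) : tvec A hm x = lam • x ↔ Fvec A hm x = 0 ∧ lam = tpow A x := by
  rw [Fvec, sub_eq_zero]
  constructor
  · intro h
    have hlam : lam = tpow A x := by
      rw [← inner_tvec_self A hm, h, real_inner_smul_left, real_inner_self_eq_norm_sq, hx]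
      ring
    exact ⟨hlam ▸ h, hlam⟩
  · rintro ⟨h, rfl⟩
    exact h

theorem stmt5_general {m n : ℕ} (hm : 2 ≤ m) (A : Tensor m n)
    (xb : Euc n) (lam : ℝ) :
    (‖xb‖ = 1 ∧ tvec A hm xb = lam • xb ∧
      ∀ d : Euc n, d ≠ 0 → ⟪xb, d⟫ = 0 →
        0 < ((m : ℝ) - 1) * A2 A hm xb d - lam * ‖d‖ ^ 2) ↔
    (‖xb‖ = 1 ∧ Fvec A hm xb = 0 ∧ lam = tpow A xb ∧
      ∀ d : Euc n, d ≠ 0 → ⟪xb, d⟫ = 0 → 0 < ⟪d, FderivL A hm xb d⟫) := by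
  refine and_congr_right fun hx => ?_
  rw [tvec_eq_smul_iff A hm hx, and_assoc]
  refine and_congr_right fun _ => and_congr_right fun hlam => ?_
  refine forall_congr' fun d => forall_congr' fun _ => forall_congr' fun hxd => ?_
  rw [inner_FderivL_self_of_inner_eq_zero A hm hxd, hlam]

/-- equivalence of the second-order sufficient KKT condition (a) with the
positive definiteness of `F'(x̄)` on the orthogonal complement of `x̄` (b). -/
theorem stmt5 {m n : ℕ} (hn : 1 ≤ n) (hm : 2 ≤ m) (A : Tensor m n) (hA : IsSymmTensor A)
    (xb : Euc n) (lam : ℝ) :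
    (‖xb‖ = 1 ∧ tvec A hm xb = lam • xb ∧
      ∀ d : Euc n, d ≠ 0 → ⟪xb, d⟫ = 0 →
        0 < ((m : ℝ) - 1) * A2 A hm xb d - lam * ‖d‖ ^ 2) ↔
    (‖xb‖ = 1 ∧ Fvec A hm xb = 0 ∧ lam = tpow A xb ∧
      ∀ d : Euc n, d ≠ 0 → ⟪xb, d⟫ = 0 → 0 < ⟪d, FderivL A hm xb d⟫) :=
  stmt5_general hm A xb lam
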